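/- arXiv:1505.01961 — 2 statements merged into one kernel-verified Lean document; each statement's English description precedes it below -/
import Mathlib

section
/- If (i_0, i_1, ..., i_f, 0, ...) is the frame of a Dyck path, then for every j with 0 < j < f - 1 we have 2 ≤ i_j ≤ i_{j-1} + i_{j+1} - 2. -/
/-- A step of a Dyck path: `true` = up step (1,1), `false` = down step (1,-1). -/
def dstep (b : Bool) : ℤ := if b then 1 else -1

/-- Height of the path after its first `k` steps. -/
def dheight (p : List Bool) (k : ℕ) : ℤ := ((p.take k).map dstep).sum

/-- A Dyck path: ends at height 0 and never goes below the x-axis. -/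
def IsDyck (p : List Bool) : Prop :=
  (p.map dstep).sum = 0 ∧ ∀ k, 0 ≤ dheight p k

/-- Number of lattice points of the path at level `l` (its "feet" at level `l`). -/
def feet (p : List Bool) (l : ℤ) : ℕ :=
  ((List.range (p.length + 1)).map (dheight p)).count l

/-- The frame of a Dyck path: at position `k`, the number of its points at height `k`. -/
def frame (p : List Bool) : ℕ → ℕ := fun k => feet p (k : ℤ)

/-- `DyckFeet m l j` = number of Dyck paths of length `m` with exactly `j` points at level `l`. -/
noncomputable def DyckFeet (m : ℕ) (l : ℤ) (j : ℕ) : ℕ :=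
  Set.ncard {p : List Bool | p.length = m ∧ IsDyck p ∧ feet p l = j}

/-- A sequence is admissible if it is the frame of some Dyck path. -/
def Admissible (I : ℕ → ℕ) : Prop := ∃ p : List Bool, IsDyck p ∧ frame p = I

/-!
The height of a Dyck path changes by `±1` at each step. As the path climbs from `0` to a peak of
height `f ≥ j + 2` and comes back to `0`, it crosses level `j` before and after the peak, so
`i_j ≥ 2`. For the upper bound, the successor of each point at level `j` lies at level `j ± 1`;
these successors are distinct and miss two points: the first point at level `j - 1` (the origin,
or entered from `j - 2`) and the first point at level `j + 1` after the peak (entered from `j + 2`).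
-/

def UnitSteps (h : ℕ → ℤ) (n : ℕ) : Prop :=
  ∀ k < n, h (k + 1) = h k + 1 ∨ h (k + 1) = h k - 1

def levelSet (h : ℕ → ℤ) (n : ℕ) (v : ℤ) : Finset ℕ :=
  (Finset.range (n + 1)).filter (h · = v)

lemma mem_levelSet {h : ℕ → ℤ} {n k : ℕ} {v : ℤ} : k ∈ levelSet h n v ↔ k ≤ n ∧ h k = v := by
  simp [levelSet]

namespace UnitSteps

variable {h : ℕ → ℤ} {n : ℕ}

lemma neg (hs : UnitSteps h n) : UnitSteps (fun k => -h k) n := fun k hk => by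
  dsimp only
  rcases hs k hk with hk | hk <;> omega

lemma exists_up_crossing (hs : UnitSteps h n) {a b : ℕ} {v : ℤ} (hab : a ≤ b) (hbn : b ≤ n)
    (ha : h a < v) (hb : v ≤ h b) : ∃ s, a ≤ s ∧ s < b ∧ h s + 1 = v ∧ h (s + 1) = v := by
  induction b, hab using Nat.le_induction with
  | base => omega
  | succ c hac ih =>
    by_cases hc : v ≤ h c
    · obtain ⟨s, has, hsc, hs⟩ := ih (by omega) hc
      exact ⟨s, has, by omega, hs⟩
    · rcases hs c (by omega) with hstep | hstep <;> exact ⟨c, hac, by omega, by omega, by omega⟩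

lemma exists_down_crossing (hs : UnitSteps h n) {a b : ℕ} {v : ℤ} (hab : a ≤ b) (hbn : b ≤ n)
    (ha : v < h a) (hb : h b ≤ v) : ∃ t, a ≤ t ∧ t < b ∧ h t = v + 1 ∧ h (t + 1) = v := by
  obtain ⟨t, hat, htb, ht, ht'⟩ :=
    hs.neg.exists_up_crossing (v := -v) hab hbn (by omega) (by omega)
  exact ⟨t, hat, htb, by omega, by omega⟩

lemma exists_eq_not_entered_from_above (hs : UnitSteps h n) {b : ℕ} {v : ℤ} (hbn : b ≤ n)
    (h0 : h 0 ≤ v) (hb : v ≤ h b) : ∃ s ≤ b, h s = v ∧ ∀ i, i + 1 = s → h i ≠ v + 1 := by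
  rcases h0.eq_or_lt with h0 | h0
  · exact ⟨0, Nat.zero_le _, h0, fun i hi => by omega⟩
  · obtain ⟨s, -, hsb, hs, hs'⟩ := hs.exists_up_crossing (Nat.zero_le b) hbn h0 hb
    exact ⟨s + 1, hsb, hs', fun i hi => by cases hi; omega⟩

lemma two_le_card_levelSet (hs : UnitSteps h n) {m : ℕ} {v : ℤ} (hmn : m ≤ n)
    (h0 : h 0 < v) (hm : v < h m) (hn : h n < v) : 2 ≤ (levelSet h n v).card := by
  obtain ⟨s, -, hsm, -, hs'⟩ := hs.exists_up_crossing (Nat.zero_le m) hmn h0 hm.le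
  obtain ⟨t, hmt, htn, -, ht⟩ := hs.exists_down_crossing hmn le_rfl hm hn.le
  exact Finset.one_lt_card.mpr
    ⟨s + 1, mem_levelSet.mpr ⟨by omega, hs'⟩, t + 1, mem_levelSet.mpr ⟨by omega, ht⟩, by omega⟩

lemma card_levelSet_add_card_le (hs : UnitSteps h n) {v : ℤ} (hn : h n ≠ v) (S : Finset ℕ)
    (hS : S ⊆ levelSet h n (v - 1) ∪ levelSet h n (v + 1))
    (hS_entry : ∀ x ∈ S, ∀ i, i + 1 = x → h i ≠ v) :
    (levelSet h n v).card + S.card ≤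
      (levelSet h n (v - 1)).card + (levelSet h n (v + 1)).card := by
  set succs := (levelSet h n v).image (· + 1)
  have hsuccs : succs ⊆ levelSet h n (v - 1) ∪ levelSet h n (v + 1) := by
    simp only [succs, Finset.image_subset_iff, Finset.mem_union, mem_levelSet]
    intro k hk
    have hkn : k < n := lt_of_le_of_ne hk.1 (by rintro rfl; exact hn hk.2)
    rcases hs k hkn with hstep | hstep <;> omega
  have hdisj : Disjoint succs S := by
    simp only [succs, Finset.disjoint_left, Finset.mem_image, mem_levelSet]
    rintro _ ⟨k, hk, rfl⟩ hkS
    exact hS_entry _ hkS k rfl hk.2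
  have hlevels : Disjoint (levelSet h n (v - 1)) (levelSet h n (v + 1)) := by
    simp only [Finset.disjoint_left, mem_levelSet]
    omega
  calc (levelSet h n v).card + S.card
      = (succs ∪ S).card := by
        rw [Finset.card_union_of_disjoint hdisj,
          Finset.card_image_of_injective _ (add_left_injective 1)]
    _ ≤ (levelSet h n (v - 1) ∪ levelSet h n (v + 1)).card :=
        Finset.card_le_card (Finset.union_subset hsuccs hS)
    _ = _ := Finset.card_union_of_disjoint hlevels

end UnitSteps

lemma dheight_zero (p : List Bool) : dheight p 0 = 0 := by
  simp [dheight]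

lemma IsDyck.dheight_length {p : List Bool} (hp : IsDyck p) : dheight p p.length = 0 := by
  rw [dheight, List.take_length]
  exact hp.1

lemma unitSteps_dheight (p : List Bool) : UnitSteps (dheight p) p.length := by
  intro k hk
  have hstep : dheight p (k + 1) = dheight p k + dstep p[k] := by
    rw [dheight, dheight, List.map_take, List.map_take,
      List.sum_take_succ _ _ (by simpa using hk)]
    simp
  cases hb : p[k] <;> simp [hb, dstep] at hstep <;> omega

lemma feet_eq_card_levelSet (p : List Bool) (l : ℤ) :
    feet p l = (levelSet (dheight p) p.length l).card := by
  have hmultiset : feet p l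
      = Multiset.count l (Multiset.map (dheight p) (Multiset.range (p.length + 1))) := by
    simp [feet, Multiset.range]
  rw [hmultiset, Multiset.count_map, levelSet, Finset.card, Finset.filter_val]
  exact congrArg _ (Multiset.filter_congr fun _ _ => eq_comm)

theorem stmt14_general (p : List Bool) (hp : IsDyck p) (f : ℕ)
    (hf : frame p f ≠ 0) :
    ∀ j, 0 < j → j < f - 1 →
      2 ≤ frame p j ∧ frame p j ≤ frame p (j - 1) + frame p (j + 1) - 2 := by
  intro j hj hjf
  have hs := unitSteps_dheight p
  have h0 := dheight_zero p
  have hn := hp.dheight_length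
  simp only [frame, feet_eq_card_levelSet] at hf ⊢
  obtain ⟨m, hm⟩ := Finset.card_ne_zero.mp hf
  rw [mem_levelSet] at hm
  obtain ⟨x₁, hx₁m, hx₁, hx₁_entry⟩ :=
    hs.exists_eq_not_entered_from_above (v := j - 1) hm.1 (by omega) (by omega)
  obtain ⟨t, hmt, htn, ht, hx₂⟩ :=
    hs.exists_down_crossing (v := j + 1) hm.1 le_rfl (by omega) (by omega)
  have hupper := hs.card_levelSet_add_card_le (v := j) (by omega) {x₁, t + 1}
    (by
      simp only [Finset.insert_subset_iff, Finset.singleton_subset_iff, Finset.mem_union,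
        mem_levelSet]
      omega)
    (by
      simp only [Finset.mem_insert, Finset.mem_singleton]
      rintro x (rfl | rfl) i hi
      · exact fun hij => hx₁_entry i hi (by omega)
      · cases hi; omega)
  rw [Finset.card_pair (by omega)] at hupper
  rw [Nat.cast_sub hj, Nat.cast_one, Nat.cast_add_one]
  exact ⟨hs.two_le_card_levelSet hm.1 (by omega) (by omega) (by omega), by omega⟩

/-- For a Dyck path of maximal height f, the frame satisfies
2 ≤ i_j ≤ i_{j-1} + i_{j+1} - 2 for all 0 < j < f - 1. -/
theorem stmt14 (p : List Bool) (hp : IsDyck p) (f : ℕ)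
    (hf : frame p f ≠ 0) (hz : ∀ k > f, frame p k = 0) :
    ∀ j, 0 < j → j < f - 1 →
      2 ≤ frame p j ∧ frame p j ≤ frame p (j - 1) + frame p (j + 1) - 2 :=
  stmt14_general p hp f hf
end

section
/- Let I = (i_0, i_1, ..., i_f, 0, ...) be an admissible frame, and define j_k = i_{k-1} - i_{k-2} + i_{k-3} - ... ± i_0 - (1 + (-1)^k) (i.e., j_1 = i_0 - 2, j_2 = i_1 - i_0, j_3 = i_2 - i_1 + i_0 - 2, j_4 = i_3 - i_2 + i_1 - i_0, alternating). Then the number of Dyck paths having frame I equals the product C(i_1 - 1, i_1 - j_1 - 1) · C(i_2 - 1, i_2 - j_2 - 1) ··· C(i_f - 1, i_f - j_f - 1). -/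
/-- j_1 = i_0 - 2, j_2 = i_1 - i_0, j_3 = i_2 - i_1 + i_0 - 2, j_4 = i_3 - i_2 + i_1 - i_0, ... -/
def jSeq (I : ℕ → ℕ) (k : ℕ) : ℤ :=
  (∑ t ∈ Finset.range k, (-1) ^ (k - 1 - t) * (I t : ℤ)) - (if Even (k - 1) then 2 else 0)

def heights (h : ℤ) (p : List Bool) : List ℤ := p.scanl (fun x b => x + dstep b) h

@[simp] lemma heights_nil (h : ℤ) : heights h [] = [h] := rfl

@[simp] lemma heights_cons (h : ℤ) (b : Bool) (p : List Bool) :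
    heights h (b :: p) = h :: heights (h + dstep b) p := by
  simp [heights]

lemma mem_heights_self (h : ℤ) (p : List Bool) : h ∈ heights h p := by
  cases p <;> simp

lemma heights_zero_eq (p : List Bool) :
    heights 0 p = (List.range (p.length + 1)).map (dheight p) := by
  refine List.ext_getElem (by simp [heights]) fun i _ _ => ?_
  simp [heights, List.getElem_scanl, dheight, List.sum_eq_foldl, List.foldl_map, -List.map_take]

lemma frame_eq_count (p : List Bool) (k : ℕ) : frame p k = (heights 0 p).count (k : ℤ) := by
  rw [frame, feet, heights_zero_eq]

lemma isDyck_iff {p : List Bool} :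
    IsDyck p ↔ (p.map dstep).sum = 0 ∧ ∀ x ∈ heights 0 p, 0 ≤ x := by
  simp only [IsDyck, heights_zero_eq, List.forall_mem_map, List.mem_range]
  refine and_congr_right fun _ => ⟨fun h k _ => h k, fun h k => ?_⟩
  rcases le_or_gt k p.length with hk | hk
  · exact h k (by omega)
  · simpa [dheight, List.take_of_length_le hk.le] using h p.length (by omega)

def peaks : ℕ → List Bool
  | 0 => []
  | c + 1 => true :: false :: peaks c

@[simp] lemma peaks_zero : peaks 0 = [] := rfl

@[simp] lemma peaks_succ_append (c : ℕ) (r : List Bool) :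
    peaks (c + 1) ++ r = true :: false :: (peaks c ++ r) := rfl

@[simp] lemma sum_map_dstep_peaks (c : ℕ) : ((peaks c).map dstep).sum = 0 := by
  induction c with
  | zero => rfl
  | succ c ih => simp [peaks, dstep, ih]

lemma count_heights_peaks_append (c : ℕ) (h m : ℤ) (r : List Bool) :
    (heights h (peaks c ++ r)).count m =
      (heights h r).count m + if m = h ∨ m = h + 1 then c else 0 := by
  induction c with
  | zero => simp
  | succ c ih =>
    simp only [peaks_succ_append, heights_cons, dstep, if_true, add_neg_cancel_right,
      Bool.false_eq_true, if_false, List.count_cons, ih, beq_iff_eq]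
    split_ifs <;> omega

lemma peaks_append_inj {c c' : ℕ} {r r' : List Bool} (hr : r.head? ≠ some true)
    (hr' : r'.head? ≠ some true) (h : peaks c ++ r = peaks c' ++ r') : c = c' ∧ r = r' := by
  induction c generalizing c' with
  | zero =>
    cases c' with
    | zero => simpa using h
    | succ c' =>
      rw [peaks_zero, List.nil_append] at h
      simp [h] at hr
  | succ c ih =>
    cases c' with
    | zero =>
      rw [peaks_zero, List.nil_append] at h
      simp [← h] at hr'
    | succ c' =>
      simp only [peaks_succ_append, List.cons.injEq, true_and] at h
      simpa using ih h

/-- Walking along `q` from height `h`, insert `cs[i]` peaks at the `i`-th visit of level `l`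
(missing entries of `cs` count as `0`). -/
def insertPeaks (l : ℤ) : List ℕ → ℤ → List Bool → List Bool
  | cs, h, [] => if h = l then peaks cs.headI else []
  | cs, h, b :: q =>
    if h = l then peaks cs.headI ++ b :: insertPeaks l cs.tail (h + dstep b) q
    else b :: insertPeaks l cs (h + dstep b) q

section insertPeaks

variable {l : ℤ}

lemma sum_map_dstep_insertPeaks (cs : List ℕ) (h : ℤ) (q : List Bool) :
    ((insertPeaks l cs h q).map dstep).sum = (q.map dstep).sum := by
  induction q generalizing cs h with
  | nil => unfold insertPeaks; split_ifs <;> simp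
  | cons b q ih => unfold insertPeaks; split_ifs <;> simp [ih]

lemma count_heights_insertPeaks {cs : List ℕ} {h : ℤ} {q : List Bool}
    (hlen : cs.length = (heights h q).count l) (m : ℤ) :
    (heights h (insertPeaks l cs h q)).count m =
      (heights h q).count m + if m = l ∨ m = l + 1 then cs.sum else 0 := by
  induction q generalizing cs h with
  | nil =>
    by_cases hl : h = l
    · subst hl
      obtain ⟨c, rfl⟩ : ∃ c, cs = [c] := List.length_eq_one_iff.mp (by simpa using hlen)
      simpa [insertPeaks] using count_heights_peaks_append c h m []
    · have : cs = [] := List.eq_nil_of_length_eq_zero (by simpa [List.count_cons, hl] using hlen)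
      simp [insertPeaks, hl, this]
  | cons b q ih =>
    by_cases hl : h = l
    · subst hl
      obtain ⟨c, t, rfl⟩ : ∃ c t, cs = c :: t :=
        List.exists_cons_of_length_pos (by simp [hlen])
      have ht : t.length = (heights (h + dstep b) q).count h := by simpa using hlen
      simp only [insertPeaks, if_true, count_heights_peaks_append, heights_cons,
        List.count_cons, ih ht, List.headI_cons, List.tail_cons, List.sum_cons, beq_iff_eq]
      split_ifs <;> omega
    · simp only [insertPeaks, if_neg hl, heights_cons, List.count_cons, beq_iff_eq]
      rw [ih (by simpa [List.count_cons, hl] using hlen)]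
      split_ifs <;> omega

lemma mem_heights_insertPeaks {cs : List ℕ} {h : ℤ} {q : List Bool}
    (hlen : cs.length = (heights h q).count l) {x : ℤ} :
    x ∈ heights h (insertPeaks l cs h q) ↔ x ∈ heights h q ∨ (x = l ∨ x = l + 1) ∧ cs.sum ≠ 0 := by
  rw [← List.count_pos_iff, count_heights_insertPeaks hlen, ← List.count_pos_iff]
  split_ifs <;> simp_all [Nat.pos_iff_ne_zero]

lemma head?_ne_true_of_heights_le {h : ℤ} {q : List Bool} (hq : ∀ x ∈ heights h q, x ≤ h) :
    q.head? ≠ some true := by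
  rcases q with _ | ⟨_ | _, q⟩
  · simp
  · simp
  · have := hq (h + dstep true) (by simp [mem_heights_self])
    simp [dstep] at this

lemma insertPeaks_cons_self (c : ℕ) (t : List ℕ) (q : List Bool) :
    insertPeaks l (c :: t) l q = peaks c ++ insertPeaks l (0 :: t) l q := by
  cases q <;> simp [insertPeaks]

lemma head?_insertPeaks_zero_cons (t : List ℕ) (q : List Bool) :
    (insertPeaks l (0 :: t) l q).head? = q.head? := by
  cases q <;> simp [insertPeaks]

-- As `q` stays at or below level `l`, it leaves level `l` by a down step, so the peaks inserted
-- there form the maximal run of `true, false` pairs.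
lemma eq_of_insertPeaks_self_eq {cs cs' : List ℕ} {q q' : List Bool}
    (hq : ∀ x ∈ heights l q, x ≤ l) (hq' : ∀ x ∈ heights l q', x ≤ l)
    (hlen : cs.length = (heights l q).count l) (hlen' : cs'.length = (heights l q').count l)
    (heq : insertPeaks l cs l q = insertPeaks l cs' l q') :
    ∃ c t t', cs = c :: t ∧ cs' = c :: t' ∧
      insertPeaks l (0 :: t) l q = insertPeaks l (0 :: t') l q' := by
  obtain ⟨c, t, rfl⟩ : ∃ c t, cs = c :: t :=
    List.exists_cons_of_length_pos (by simp [hlen, mem_heights_self])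
  obtain ⟨c', t', rfl⟩ : ∃ c t, cs' = c :: t :=
    List.exists_cons_of_length_pos (by simp [hlen', mem_heights_self])
  rw [insertPeaks_cons_self c t, insertPeaks_cons_self c' t'] at heq
  obtain ⟨rfl, hrest⟩ := peaks_append_inj
    (by simpa [head?_insertPeaks_zero_cons] using head?_ne_true_of_heights_le hq)
    (by simpa [head?_insertPeaks_zero_cons] using head?_ne_true_of_heights_le hq') heq
  exact ⟨c, t, t', rfl, rfl, hrest⟩

lemma insertPeaks_inj {cs cs' : List ℕ} {h : ℤ} {q q' : List Bool}
    (hq : ∀ x ∈ heights h q, x ≤ l) (hq' : ∀ x ∈ heights h q', x ≤ l)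
    (hlen : cs.length = (heights h q).count l) (hlen' : cs'.length = (heights h q').count l)
    (heq : insertPeaks l cs h q = insertPeaks l cs' h q') : q = q' ∧ cs = cs' := by
  induction q generalizing q' cs cs' h with
  | nil =>
    by_cases hl : h = l
    · subst hl
      obtain ⟨c, t, t', rfl, rfl, hrest⟩ := eq_of_insertPeaks_self_eq hq hq' hlen hlen' heq
      cases q' <;> simp_all [insertPeaks]
    · cases q' <;> simp_all [insertPeaks]
  | cons b r ih =>
    have hr : ∀ x ∈ heights (h + dstep b) r, x ≤ l := fun x hx => hq x (by simp [hx])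
    by_cases hl : h = l
    · subst hl
      obtain ⟨c, t, t', rfl, rfl, hrest⟩ := eq_of_insertPeaks_self_eq hq hq' hlen hlen' heq
      rcases q' with _ | ⟨b', r'⟩
      · simp_all [insertPeaks]
      · simp only [insertPeaks, if_true, List.headI_cons, List.tail_cons, peaks_zero,
          List.nil_append, List.cons.injEq] at hrest
        obtain ⟨rfl, hrest⟩ := hrest
        simpa using ih hr (fun x hx => hq' x (by simp [hx]))
          (by simpa [List.count_cons] using hlen) (by simpa [List.count_cons] using hlen') hrest
    · rcases q' with _ | ⟨b', r'⟩
      · simp_all [insertPeaks]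
      · simp only [insertPeaks, if_neg hl, List.cons.injEq] at heq
        obtain ⟨rfl, heq⟩ := heq
        simpa using ih hr (fun x hx => hq' x (by simp [hx]))
          (by simpa [List.count_cons, hl] using hlen) (by simpa [List.count_cons, hl] using hlen')
          heq

lemma exists_insertPeaks_eq : ∀ (p : List Bool) (h : ℤ), (∀ x ∈ heights h p, x ≤ l + 1) →
    h ≤ l → h + (p.map dstep).sum ≤ l →
    ∃ q cs, (∀ x ∈ heights h q, x ≤ l) ∧ cs.length = (heights h q).count l ∧
      insertPeaks l cs h q = p
  | [], h, _, hhl, _ =>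
    ⟨[], if h = l then [0] else [], by simpa using hhl,
      by split_ifs <;> simp [*], by split_ifs <;> simp [insertPeaks, *]⟩
  | b :: r, h, hp, hhl, hend => by
    have hr : ∀ x ∈ heights (h + dstep b) r, x ≤ l + 1 := fun x hx => hp x (by simp [hx])
    have hrend : h + dstep b + (r.map dstep).sum ≤ l := by simpa [add_assoc] using hend
    by_cases hl : h = l
    · subst h
      cases b
      · obtain ⟨q, cs, hq, hlen, rfl⟩ :=
          exists_insertPeaks_eq r (l + dstep false) hr (by simp [dstep]) hrend
        refine ⟨false :: q, 0 :: cs, ?_, by simp [hlen], by simp [insertPeaks]⟩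
        simpa using hq
      · obtain ⟨r, rfl⟩ : ∃ r', r = false :: r' := by
          rcases r with _ | ⟨_ | _, r'⟩
          · simp [dstep] at hrend
          · exact ⟨r', rfl⟩
          · simp only [heights_cons, List.mem_cons, forall_eq_or_imp] at hr
            have := hr.2 _ (mem_heights_self _ _)
            simp [dstep] at this
        have hr' : ∀ x ∈ heights l r, x ≤ l + 1 := fun x hx => hr x (by simp [dstep, hx])
        obtain ⟨q, cs, hq, hlen, rfl⟩ :=
          exists_insertPeaks_eq r l hr' le_rfl (by simpa [dstep] using hrend)
        obtain ⟨c, t, rfl⟩ : ∃ c t, cs = c :: t :=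
          List.exists_cons_of_length_pos (by simp [hlen, mem_heights_self])
        refine ⟨q, (c + 1) :: t, hq, by simpa using hlen, ?_⟩
        rw [insertPeaks_cons_self, insertPeaks_cons_self c]
        simp
    · obtain ⟨q, cs, hq, hlen, rfl⟩ :=
        exists_insertPeaks_eq r (h + dstep b) hr (by cases b <;> simp [dstep] <;> omega) hrend
      exact ⟨b :: q, cs, by simpa [hhl] using hq, by simpa [List.count_cons, hl] using hlen,
        by simp [insertPeaks, hl]⟩

end insertPeaks

lemma heights_le_of_frame_eq_zero {p : List Bool} {l : ℕ} (hp : IsDyck p)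
    (hz : ∀ k > l, frame p k = 0) : ∀ x ∈ heights 0 p, x ≤ l := by
  intro x hx
  by_contra! hlt
  have hx0 : 0 ≤ x := (isDyck_iff.1 hp).2 x hx
  have := hz x.toNat (by omega)
  rw [frame_eq_count, Int.toNat_of_nonneg hx0, List.count_eq_zero] at this
  exact this hx

lemma frame_insertPeaks {l : ℕ} {cs : List ℕ} {q : List Bool}
    (hlen : cs.length = (heights 0 q).count (l : ℤ)) (k : ℕ) :
    frame (insertPeaks l cs 0 q) k = frame q k + if k = l ∨ k = l + 1 then cs.sum else 0 := by
  simp only [frame_eq_count, count_heights_insertPeaks hlen]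
  norm_cast

lemma isDyck_insertPeaks_iff {l : ℤ} (hl : 0 ≤ l) {cs : List ℕ} {q : List Bool}
    (hlen : cs.length = (heights 0 q).count l) : IsDyck (insertPeaks l cs 0 q) ↔ IsDyck q := by
  simp only [isDyck_iff, sum_map_dstep_insertPeaks, mem_heights_insertPeaks hlen]
  refine and_congr_right fun _ => ⟨fun h x hx => h x (Or.inl hx), ?_⟩
  rintro h x (hx | ⟨hx | hx, -⟩)
  · exact h x hx
  all_goals omega

/-- The frame left after deleting the peaks at level `l + 1`. -/
def lowerFrame (I : ℕ → ℕ) (l : ℕ) : ℕ → ℕ :=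
  fun k => if k = l then I l - I (l + 1) else if k = l + 1 then 0 else I k

lemma frame_eq_lowerFrame_of_frame_insertPeaks {l : ℕ} {I : ℕ → ℕ} {cs : List ℕ}
    {q : List Bool} (hq : ∀ x ∈ heights 0 q, x ≤ l)
    (hlen : cs.length = (heights 0 q).count (l : ℤ)) (hI : frame (insertPeaks l cs 0 q) = I) :
    frame q = lowerFrame I l ∧ cs.sum = I (l + 1) ∧ I (l + 1) ≤ I l := by
  have hk := frame_insertPeaks hlen
  rw [hI] at hk
  have htop : frame q (l + 1) = 0 := by
    rw [frame_eq_count, List.count_eq_zero]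
    exact fun h => by have := hq _ h; omega
  have hs : cs.sum = I (l + 1) := by simpa [htop] using (hk (l + 1)).symm
  have hl : I l = frame q l + cs.sum := by simpa using hk l
  refine ⟨funext fun k => ?_, hs, by omega⟩
  unfold lowerFrame
  split_ifs with h1 h2
  · subst h1; omega
  · rwa [h2]
  · simpa [h1, h2] using (hk k).symm

lemma frame_insertPeaks_of_frame_eq_lowerFrame {l : ℕ} {I : ℕ → ℕ} {cs : List ℕ}
    {q : List Bool} (hle : I (l + 1) ≤ I l) (hlen : cs.length = (heights 0 q).count (l : ℤ))
    (hq : frame q = lowerFrame I l) (hs : cs.sum = I (l + 1)) :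
    frame (insertPeaks l cs 0 q) = I := by
  funext k
  rw [frame_insertPeaks hlen, hq, hs, lowerFrame]
  split_ifs <;> subst_vars <;> omega

lemma exists_insertPeaks_of_frame_eq {l : ℕ} {I : ℕ → ℕ} {p : List Bool} (hp : IsDyck p)
    (hpI : frame p = I) (hz : ∀ k > l + 1, I k = 0) :
    ∃ q cs, IsDyck q ∧ frame q = lowerFrame I l ∧ cs.length = lowerFrame I l l ∧
      cs.sum = I (l + 1) ∧ I (l + 1) ≤ I l ∧ insertPeaks l cs 0 q = p := by
  have hb := heights_le_of_frame_eq_zero hp (l := l + 1) (hpI ▸ hz)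
  obtain ⟨q, cs, hq, hlen, rfl⟩ := exists_insertPeaks_eq (l := l) p 0 (by exact_mod_cast hb)
    (by positivity) (by rw [(isDyck_iff.1 hp).1]; positivity)
  obtain ⟨hfq, hs, hle⟩ := frame_eq_lowerFrame_of_frame_insertPeaks hq hlen hpI
  exact ⟨q, cs, (isDyck_insertPeaks_iff (by positivity) hlen).1 hp, hfq,
    by rw [hlen, ← frame_eq_count, hfq], hs, hle, rfl⟩

lemma admissible_lowerFrame {l : ℕ} {I : ℕ → ℕ} (hI : Admissible I)
    (hz : ∀ k > l + 1, I k = 0) : I (l + 1) ≤ I l ∧ Admissible (lowerFrame I l) := by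
  obtain ⟨p, hp, hpI⟩ := hI
  obtain ⟨q, -, hq, hfq, -, -, hle, -⟩ := exists_insertPeaks_of_frame_eq hp hpI hz
  exact ⟨hle, q, hq, hfq⟩

lemma lowerFrame_eq_zero {l : ℕ} {I : ℕ → ℕ} (hz : ∀ k > l + 1, I k = 0) :
    ∀ k > l, lowerFrame I l k = 0 := by
  intro k hk
  unfold lowerFrame
  split_ifs <;> first | omega | exact hz k (by omega)

lemma ncard_length_eq_and_sum_eq (V n : ℕ) :
    {cs : List ℕ | cs.length = V ∧ cs.sum = n}.ncard = (V + n - 1).choose n := by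
  have himage : {cs : List ℕ | cs.length = V ∧ cs.sum = n} =
      List.ofFn '' {P : Fin V → ℕ | ∑ i, P i = n} := by
    ext cs
    constructor
    · rintro ⟨rfl, hs⟩
      exact ⟨cs.get, by simpa [← List.sum_ofFn] using hs, List.ofFn_get cs⟩
    · rintro ⟨P, hP, rfl⟩
      exact ⟨List.length_ofFn, by simpa [List.sum_ofFn] using hP⟩
  calc _ = Nat.card {P : Fin V → ℕ // ∑ i, P i = n} := by
        rw [himage, Set.ncard_image_of_injective _ List.ofFn_injective, ← Nat.card_coe_set_eq]
        rfl
    _ = Nat.card (Sym (Fin V) n) := (Nat.card_congr (Sym.equivNatSumOfFintype (Fin V) n)).symm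
    _ = _ := by rw [Sym.natCard_sym_eq_choose, Nat.card_fin]

theorem ncard_frame_eq_mul_choose {l : ℕ} {I : ℕ → ℕ} (hle : I (l + 1) ≤ I l)
    (hz : ∀ k > l + 1, I k = 0) :
    {p | IsDyck p ∧ frame p = I}.ncard =
      {q | IsDyck q ∧ frame q = lowerFrame I l}.ncard * (I l - 1).choose (I (l + 1)) := by
  set S := {q | IsDyck q ∧ frame q = lowerFrame I l} ×ˢ
    {cs : List ℕ | cs.length = lowerFrame I l l ∧ cs.sum = I (l + 1)}
  have hlen : ∀ x ∈ S, x.2.length = (heights 0 x.1).count (l : ℤ) := by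
    rintro ⟨q, cs⟩ ⟨⟨-, hq⟩, hcs, -⟩
    rw [hcs, ← hq, frame_eq_count]
  have hbound : ∀ x ∈ S, ∀ y ∈ heights 0 x.1, y ≤ l := fun x hx =>
    heights_le_of_frame_eq_zero hx.1.1 (hx.1.2 ▸ lowerFrame_eq_zero hz)
  have hbij : Set.BijOn (fun x : List Bool × List ℕ => insertPeaks l x.2 0 x.1) S
      {p | IsDyck p ∧ frame p = I} := by
    refine ⟨fun x hx => ⟨?_, ?_⟩, fun x hx y hy hxy => ?_, fun p ⟨hp, hpI⟩ => ?_⟩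
    · exact (isDyck_insertPeaks_iff (by positivity) (hlen x hx)).2 hx.1.1
    · exact frame_insertPeaks_of_frame_eq_lowerFrame hle (hlen x hx) hx.1.2 hx.2.2
    · obtain ⟨h1, h2⟩ := insertPeaks_inj (hbound x hx) (hbound y hy) (hlen x hx) (hlen y hy) hxy
      exact Prod.ext h1 h2
    · obtain ⟨q, cs, hq, hfq, hcs, hs, -, rfl⟩ := exists_insertPeaks_of_frame_eq hp hpI hz
      exact ⟨(q, cs), ⟨⟨hq, hfq⟩, hcs, hs⟩, rfl⟩
  rw [← hbij.image_eq, hbij.injOn.ncard_image, Set.ncard_prod, ncard_length_eq_and_sum_eq]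
  congr 2
  simp [lowerFrame]
  omega

lemma jSeq_succ (I : ℕ → ℕ) {k : ℕ} (hk : 1 ≤ k) :
    jSeq I (k + 1) = I k - jSeq I k - 2 := by
  obtain ⟨k, rfl⟩ := Nat.exists_eq_add_of_le' hk
  have hsign : ∀ t ∈ Finset.range (k + 1),
      (-1 : ℤ) ^ (k + 1 - t) * I t = -((-1) ^ (k - t) * I t) := fun t ht => by
    rw [Nat.sub_add_comm (Finset.mem_range_succ_iff.1 ht), pow_succ]
    ring
  simp only [jSeq, Finset.sum_range_succ _ (k + 1), Nat.add_sub_cancel, Nat.sub_self, pow_zero,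
    one_mul, Finset.sum_congr rfl hsign, Finset.sum_neg_distrib, Nat.even_add_one]
  split_ifs <;> ring

lemma jSeq_succ_sub_congr {I I' : ℕ → ℕ} {k : ℕ} (h : ∀ t < k, I t = I' t) :
    jSeq I (k + 1) - I k = jSeq I' (k + 1) - I' k := by
  simp only [jSeq, Finset.sum_range_succ, Nat.add_sub_cancel, Nat.sub_self, pow_zero, one_mul]
  rw [Finset.sum_congr rfl fun t ht => by rw [h t (Finset.mem_range.1 ht)]]
  ring

lemma jSeq_lowerFrame {l : ℕ} {I : ℕ → ℕ} (hle : I (l + 1) ≤ I l) :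
    jSeq (lowerFrame I l) (l + 1) = jSeq I (l + 1) - I (l + 1) := by
  have := jSeq_succ_sub_congr (I := lowerFrame I l) (I' := I) (k := l)
    fun t ht => by simp [lowerFrame, ht.ne, (ht.trans l.lt_succ_self).ne]
  simp only [lowerFrame, if_true] at this
  push_cast [hle] at this
  linarith

lemma eq_nil_of_frame_eq_zero {p : List Bool} (hp : IsDyck p) (hz : ∀ k > 0, frame p k = 0) :
    p = [] := by
  cases p with
  | nil => rfl
  | cons b r =>
    have hup := heights_le_of_frame_eq_zero hp hz (dstep b) (by simp [mem_heights_self])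
    have hdown := (isDyck_iff.1 hp).2 (dstep b) (by simp [mem_heights_self])
    cases b <;> simp [dstep] at hup hdown

/-- Equivalently `i_0 - i_1 + i_2 - ⋯ = 1`: a Dyck path has one more point at even height than
at odd height. -/
theorem Admissible.jSeq_eq_neg_one : ∀ {f : ℕ} {I : ℕ → ℕ}, Admissible I →
    (∀ k > f, I k = 0) → jSeq I (f + 1) = -1
  | 0, _, ⟨p, hp, rfl⟩, hz => by
    rw [eq_nil_of_frame_eq_zero hp hz]
    simp [jSeq, frame, feet, dheight]
  | f + 1, I, hI, hz => by
    obtain ⟨hle, hI'⟩ := admissible_lowerFrame hI hz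
    have := hI'.jSeq_eq_neg_one (lowerFrame_eq_zero hz)
    rw [jSeq_lowerFrame hle] at this
    rw [jSeq_succ I (by omega)]
    linarith

/-- For `k ≥ 1` this is the factor `C(i_k - 1, i_k - j_k - 1)`, since `j_(k+1) = i_k - j_k - 2`;
for `k = 0` it is `1`. -/
def frameFactor (I : ℕ → ℕ) (k : ℕ) : ℕ := (I k - 1).choose (jSeq I (k + 1) + 1).toNat

lemma frameFactor_zero (I : ℕ → ℕ) : frameFactor I 0 = 1 := by
  have : ((I 0 : ℤ) - 2 + 1).toNat = I 0 - 1 := by omega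
  simp [frameFactor, jSeq, this]

lemma frameFactor_of_jSeq_eq_neg_one {I : ℕ → ℕ} {k : ℕ} (h : jSeq I (k + 1) = -1) :
    frameFactor I k = 1 := by
  simp [frameFactor, h]

lemma frameFactor_congr {I I' : ℕ → ℕ} {k : ℕ} (h : ∀ t ≤ k, I t = I' t) :
    frameFactor I k = frameFactor I' k := by
  have : jSeq I (k + 1) = jSeq I' (k + 1) := by
    simp only [jSeq]
    rw [Finset.sum_congr rfl fun t ht => by rw [h t (Finset.mem_range_succ_iff.1 ht)]]
  rw [frameFactor, frameFactor, this, h k le_rfl]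

theorem Admissible.ncard_eq_prod_frameFactor : ∀ {f : ℕ} {I : ℕ → ℕ}, Admissible I →
    (∀ k > f, I k = 0) →
    {p | IsDyck p ∧ frame p = I}.ncard = ∏ k ∈ Finset.range (f + 1), frameFactor I k
  | 0, _, ⟨p, hp, rfl⟩, hz => by
    obtain rfl := eq_nil_of_frame_eq_zero hp hz
    have : {q | IsDyck q ∧ frame q = frame []} = {[]} := Set.ext fun q =>
      ⟨fun ⟨hq, hfq⟩ => eq_nil_of_frame_eq_zero hq (hfq ▸ hz), by rintro rfl; exact ⟨hp, rfl⟩⟩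
    simp [this, frameFactor_zero]
  | f + 1, I, hI, hz => by
    obtain ⟨hle, hI'⟩ := admissible_lowerFrame hI hz
    have hz' := lowerFrame_eq_zero hz
    have hjI' := hI'.jSeq_eq_neg_one hz'
    have hjI : jSeq I (f + 1) = I (f + 1) - 1 := by rw [jSeq_lowerFrame hle] at hjI'; linarith
    rw [ncard_frame_eq_mul_choose hle hz, hI'.ncard_eq_prod_frameFactor hz',
      Finset.prod_range_succ, Finset.prod_range_succ _ (f + 1), Finset.prod_range_succ,
      frameFactor_of_jSeq_eq_neg_one hjI', frameFactor_of_jSeq_eq_neg_one (hI.jSeq_eq_neg_one hz),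
      frameFactor, hjI, sub_add_cancel, Int.toNat_natCast, mul_one, mul_one]
    congr 1
    refine Finset.prod_congr rfl fun k hk => frameFactor_congr fun t ht => ?_
    have := Finset.mem_range.1 hk
    simp [lowerFrame, show t ≠ f by omega, show t ≠ f + 1 by omega]

theorem stmt18_general (I : ℕ → ℕ) (f : ℕ) (hI : Admissible I)
    (hz : ∀ k > f, I k = 0) :
    Set.ncard {p : List Bool | IsDyck p ∧ frame p = I} =
      ∏ k ∈ Finset.Icc 1 f, Nat.choose (I k - 1) (((I k : ℤ) - jSeq I k - 1).toNat) := by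
  rw [hI.ncard_eq_prod_frameFactor hz, Finset.range_eq_Ico,
    Finset.prod_eq_prod_Ico_succ_bot (by omega : 0 < f + 1), frameFactor_zero, one_mul, zero_add,
    Finset.Ico_add_one_right_eq_Icc]
  refine Finset.prod_congr rfl fun k hk => ?_
  rw [frameFactor, jSeq_succ I (Finset.mem_Icc.1 hk).1]
  congr 2
  ring

/-- The number of Dyck paths with admissible frame (i_0,...,i_f,0,...) equals
C(i_1-1, i_1-j_1-1) · C(i_2-1, i_2-j_2-1) ··· C(i_f-1, i_f-j_f-1). -/
theorem stmt18 (I : ℕ → ℕ) (f : ℕ) (hI : Admissible I) (hf : I f ≠ 0)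
    (hz : ∀ k > f, I k = 0) :
    Set.ncard {p : List Bool | IsDyck p ∧ frame p = I} =
      ∏ k ∈ Finset.Icc 1 f, Nat.choose (I k - 1) (((I k : ℤ) - jSeq I k - 1).toNat) :=
  stmt18_general I f hI hz
end
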